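/- arXiv:1908.07076 — 3 statements merged into one kernel-verified Lean document; each statement's English description precedes it below -/
import Mathlib

section
/- For the minimum tardiness job sequencing DP, the cost-to-go h_i is monotone with respect to relaxation: if V' ⊆ V and t' ≤ t, then h_i((V', t')) ≤ h_i((V, t)). -/
/-- Cost-to-go for the minimum tardiness job sequencing DP, with `k` stages remaining:
minimize over unscheduled jobs x the tardiness (max(r x, t) + p x − d x)⁺ plus the
cost-to-go of the successor state. -/
def costToGo (n : ℕ) (r p d : Fin n → ℝ) : ℕ → Finset (Fin n) × ℝ → ℝ
  | 0, _ => 0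
  | k + 1, (V, t) =>
    if hne : (Finset.univ \ V).Nonempty then
      (Finset.univ \ V).inf' hne fun x =>
        max 0 (max (r x) t + p x - d x)
          + costToGo n r p d k (insert x V, max (r x) t + p x)
    else 0

/-- The cost-to-go of the minimum tardiness DP is monotone with respect to relaxation:
if V' ⊆ V and t' ≤ t (and the control sets encountered are nonempty, guaranteed by
V.card + k ≤ n), then h(V',t') ≤ h(V,t). -/
theorem stmt_16 (n : ℕ) (r p d : Fin n → ℝ) (hp : ∀ j, 0 ≤ p j)
    (k : ℕ) (V V' : Finset (Fin n)) (t t' : ℝ)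
    (hk : V.card + k ≤ n) (hV : V' ⊆ V) (ht : t' ≤ t) :
    costToGo n r p d k (V', t') ≤ costToGo n r p d k (V, t) := by
  induction k generalizing V V' t t' with
  | zero => simp [costToGo]
  | succ k ih =>
    have hVlt : V.card < n := by omega
    have hne : (Finset.univ \ V).Nonempty := by
      rw [Finset.sdiff_nonempty]
      intro h
      have := Finset.card_le_card h
      simp at this
      omega
    have hne' : (Finset.univ \ V').Nonempty := by
      rw [Finset.sdiff_nonempty]
      intro h
      exact (Finset.sdiff_nonempty.mp hne) (h.trans hV)
    rw [costToGo, costToGo, dif_pos hne, dif_pos hne']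
    apply Finset.le_inf'
    intro x hx
    have hxV : x ∉ V := (Finset.mem_sdiff.mp hx).2
    have hxV' : x ∉ V' := fun h => hxV (hV h)
    have hx' : x ∈ Finset.univ \ V' := Finset.mem_sdiff.mpr ⟨Finset.mem_univ x, hxV'⟩
    refine le_trans (Finset.inf'_le _ hx') ?_
    have hmt : max (r x) t' + p x ≤ max (r x) t + p x := add_le_add (max_le_max le_rfl ht) le_rfl
    apply add_le_add
    · exact max_le_max le_rfl (by linarith)
    · apply ih
      · rw [Finset.card_insert_of_notMem hxV]; omega
      · exact Finset.insert_subset_insert _ hV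
      · exact hmt
end

section
/- In a layered weighted DAG where each arc from layer i with label v ∈ {1,…,n} has its length increased by λ_v, and each arc leaving the root additionally decreased by ∑_{j=1}^n λ_j, the length of any r–u path with label sequence x changes by exactly ∑_{i=1}^n λ_{x_i} − ∑_{j=1}^n λ_j, which is the Lagrangian penalty λᵀ g(x) for the all-different constraint. -/
/-- If each arc of a path with label v has its length increased by λ_v, and the arc
leaving the root is additionally decreased by ∑_j λ_j, then the path length changes by
exactly ∑_i λ_{x_i} − ∑_j λ_j, which equals the Lagrangian penalty λᵀg(x) for the
all-different constraint, where g_j(x) = (∑_i [x_i = j]) − 1. -/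
theorem stmt_17 (n : ℕ) (hn : 0 < n) (ℓ : Fin n → ℝ) (x : Fin n → Fin n)
    (lam : Fin n → ℝ) :
    (∑ i : Fin n, (ℓ i + lam (x i) + if (i : ℕ) = 0 then -(∑ j : Fin n, lam j) else 0))
        = (∑ i : Fin n, ℓ i) + ((∑ i : Fin n, lam (x i)) - ∑ j : Fin n, lam j) ∧
    ((∑ i : Fin n, lam (x i)) - ∑ j : Fin n, lam j)
        = ∑ j : Fin n, lam j * ((∑ i : Fin n, if x i = j then (1 : ℝ) else 0) - 1) := by
  constructor
  · have h : (∑ i : Fin n, if (i : ℕ) = 0 then -(∑ j : Fin n, lam j) else 0)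
        = -(∑ j : Fin n, lam j) := by
      rw [Finset.sum_eq_single (⟨0, hn⟩ : Fin n)]
      · simp
      · intro b _ hb
        simp only [ite_eq_right_iff]
        intro h0
        exact absurd (Fin.ext h0) hb
      · simp
    simp only [Finset.sum_add_distrib, h]
    ring
  · have key : ∑ j : Fin n, lam j * (∑ i : Fin n, if x i = j then (1 : ℝ) else 0)
        = ∑ i : Fin n, lam (x i) := by
      simp only [Finset.mul_sum, mul_ite, mul_one, mul_zero]
      rw [Finset.sum_comm]
      congr 1
      ext i
      simp [Finset.sum_ite_eq' Finset.univ (x i) lam, eq_comm]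
    simp only [mul_sub, mul_one, Finset.sum_sub_distrib, key]
end

section
/- For the traveling salesman DP with states (V, y) where y is the last visited city, merging all states in a layer that share the same y yields a relaxed DP whose immediate costs p_{y x} are computed exactly; consequently the shortest path value in the width-n relaxed diagram is a lower bound on the optimal tour length over all label sequences, and equals min over sequences x_1,…,x_n ∈ {1,…,n} (not necessarily distinct) of ∑_i p_{x_{i−1} x_i} (with a fixed start x_0). -/
/-- Value function of the relaxed TSP diagram in which all states in a layer sharing
the same last city y are merged: with k layers remaining, minimize over the next city
x the exact immediate cost p y x plus the value with k−1 layers remaining. -/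
def relaxedTSP (n : ℕ) (hn : 0 < n) (p : Fin n → Fin n → ℝ) : ℕ → Fin n → ℝ
  | 0, _ => 0
  | k + 1, y =>
    haveI : Nonempty (Fin n) := ⟨⟨0, hn⟩⟩
    Finset.univ.inf' Finset.univ_nonempty fun x => p y x + relaxedTSP n hn p k x

/-- The cost of following a (not necessarily all-different) sequence of cities starting
from y. -/
def seqCost (n : ℕ) (p : Fin n → Fin n → ℝ) : Fin n → List (Fin n) → ℝ
  | _, [] => 0
  | y, x :: xs => p y x + seqCost n p x xs

theorem relaxedTSP_le (n : ℕ) (hn : 0 < n) (p : Fin n → Fin n → ℝ) :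
    ∀ (k : ℕ) (y : Fin n) (L : List (Fin n)), L.length = k →
      relaxedTSP n hn p k y ≤ seqCost n p y L := by
  intro k
  induction k with
  | zero => intro y L hL; simp [List.length_eq_zero_iff] at hL; subst hL; simp [relaxedTSP, seqCost]
  | succ k ih =>
    intro y L hL
    match L with
    | x :: xs =>
      simp at hL
      calc relaxedTSP n hn p (k+1) y ≤ p y x + relaxedTSP n hn p k x := by
            rw [relaxedTSP]
            exact Finset.inf'_le _ (Finset.mem_univ x)
        _ ≤ p y x + seqCost n p x xs := by
            have := ih x xs hL
            linarith

theorem relaxedTSP_exists (n : ℕ) (hn : 0 < n) (p : Fin n → Fin n → ℝ) :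
    ∀ (k : ℕ) (y : Fin n), ∃ L : List (Fin n), L.length = k ∧
      relaxedTSP n hn p k y = seqCost n p y L := by
  intro k
  induction k with
  | zero => intro y; exact ⟨[], rfl, by simp [relaxedTSP, seqCost]⟩
  | succ k ih =>
    intro y
    haveI : Nonempty (Fin n) := ⟨⟨0, hn⟩⟩
    obtain ⟨x, -, hx⟩ := Finset.exists_mem_eq_inf' (Finset.univ_nonempty (α := Fin n))
      (fun x => p y x + relaxedTSP n hn p k x)
    obtain ⟨L, hL, hLeq⟩ := ih x
    exact ⟨x :: L, by simp [hL], by rw [relaxedTSP, hx, seqCost, hLeq]⟩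

/-- Merging states (V,y) by equal y yields a relaxed DP whose immediate costs p_{yx}
are exact; consequently the shortest path value of the width-n relaxed diagram is a
lower bound on the cost of every sequence of n city labels (in particular on the
optimal tour length) and equals the minimum of ∑_i p_{x_{i−1} x_i} over all such
sequences, with fixed start x₀. -/
theorem stmt_19 (n : ℕ) (hn : 0 < n) (p : Fin n → Fin n → ℝ)
    (hp : ∀ a b, 0 ≤ p a b) (x0 : Fin n) :
    (∀ L : List (Fin n), L.length = n → relaxedTSP n hn p n x0 ≤ seqCost n p x0 L) ∧
    (∃ L : List (Fin n), L.length = n ∧ relaxedTSP n hn p n x0 = seqCost n p x0 L) := by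
  exact ⟨fun L hL => relaxedTSP_le n hn p n x0 L hL, relaxedTSP_exists n hn p n x0⟩
end
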